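/- Let E be a CPTN super-operator on L(H) and define wp(Q) = E(E†(Q)) (eigenvalue-1 eigenspace of E†(Q)) for projectors Q. Then wp preserves finite meets: wp(P ∧ Q) = wp(P) ∧ wp(Q) for all projectors P, Q, where ∧ is subspace intersection. -/

import Mathlib

open Matrix
open scoped ComplexOrder

noncomputable section

/-- Löwner order: `A ⊑ B` iff `B - A` is positive semidefinite. -/
def Loewner {d : Type*} [Fintype d] (A B : Matrix d d ℂ) : Prop :=
  (B - A).PosSemidef

/-- An effect: a positive semidefinite operator bounded above by the identity. -/
def IsEffect {d : Type*} [Fintype d] [DecidableEq d] (M : Matrix d d ℂ) : Prop :=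
  M.PosSemidef ∧ (1 - M).PosSemidef

/-- A (partial) density operator: positive semidefinite with trace at most 1. -/
def IsDensity {d : Type*} [Fintype d] (ρ : Matrix d d ℂ) : Prop :=
  ρ.PosSemidef ∧ ρ.trace.re ≤ 1

/-- An orthogonal projector: Hermitian idempotent. -/
def IsProj {d : Type*} [Fintype d] (P : Matrix d d ℂ) : Prop :=
  P.IsHermitian ∧ P * P = P

-- Demonic expectation: `inf_{M ∈ Θ} tr(M ρ)`, with the convention that the
-- infimum over the empty set is `tr ρ`.
open Classical in
def demExp {d : Type*} [Fintype d] (Θ : Set (Matrix d d ℂ)) (ρ : Matrix d d ℂ) : ℝ :=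
  if Θ = ∅ then ρ.trace.re else sInf ((fun M => (M * ρ).trace.re) '' Θ)

/-- Angelic expectation: `sup_{M ∈ Θ} tr(M ρ)`; note `sSup ∅ = 0` in `ℝ`,
matching the convention that the supremum over the empty set is `0`. -/
def angExp {d : Type*} [Fintype d] (Θ : Set (Matrix d d ℂ)) (ρ : Matrix d d ℂ) : ℝ :=
  sSup ((fun M => (M * ρ).trace.re) '' Θ)

/-- The extension `I_{Fin m} ⊗ Φ` of a super-operator `Φ`, acting blockwise. -/
def tensorMap {n : ℕ} (Φ : Matrix (Fin n) (Fin n) ℂ → Matrix (Fin n) (Fin n) ℂ) (m : ℕ)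
    (A : Matrix (Fin m × Fin n) (Fin m × Fin n) ℂ) :
    Matrix (Fin m × Fin n) (Fin m × Fin n) ℂ :=
  fun p q => Φ (Matrix.of fun a b => A (p.1, a) (q.1, b)) p.2 q.2

/-- Complete positivity: every extension `I_K ⊗ Φ` maps positive semidefinite
matrices to positive semidefinite matrices. -/
def IsCP {n : ℕ} (Φ : Matrix (Fin n) (Fin n) ℂ → Matrix (Fin n) (Fin n) ℂ) : Prop :=
  ∀ (m : ℕ) (A : Matrix (Fin m × Fin n) (Fin m × Fin n) ℂ),
    A.PosSemidef → (tensorMap Φ m A).PosSemidef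

/-- Trace-nonincreasing on positive operators. -/
def IsTNI {n : ℕ} (Φ : Matrix (Fin n) (Fin n) ℂ → Matrix (Fin n) (Fin n) ℂ) : Prop :=
  ∀ A : Matrix (Fin n) (Fin n) ℂ, A.PosSemidef → (Φ A).trace.re ≤ A.trace.re

/-- Trace-preserving on positive operators. -/
def IsTP {n : ℕ} (Φ : Matrix (Fin n) (Fin n) ℂ → Matrix (Fin n) (Fin n) ℂ) : Prop :=
  ∀ A : Matrix (Fin n) (Fin n) ℂ, A.PosSemidef → (Φ A).trace = A.trace

/-- CPTN super-operator: linear, completely positive, and trace-nonincreasing. -/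
def IsCPTN {n : ℕ} (Φ : Matrix (Fin n) (Fin n) ℂ → Matrix (Fin n) (Fin n) ℂ) : Prop :=
  IsLinearMap ℂ Φ ∧ IsCP Φ ∧ IsTNI Φ

/-- The Choi matrix `J(Φ) = (Φ ⊗ I)(Ω)` of `Φ`, where `Ω` is the maximally
entangled state on `H ⊗ H`. -/
def choi {n : ℕ} (Φ : Matrix (Fin n) (Fin n) ℂ → Matrix (Fin n) (Fin n) ℂ) :
    Matrix (Fin n × Fin n) (Fin n × Fin n) ℂ :=
  fun p q => (1 / (n : ℂ)) * Φ (Matrix.single p.2 q.2 1) p.1 q.1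

/-! A vector `v` is fixed by the effect `E†(R)` exactly when `tr (R E(v v*)) = ‖v‖²`. As `E` is
trace-nonincreasing and `R ≤ 1`, for a projector `R` this splits into `tr E(v v*) = ‖v‖²` and
`tr ((1 - R) E(v v*)) = 0`, i.e. `R E(v v*) = E(v v*)`. So `v ∈ wp(R)` says that `E(v v*)` keeps
full trace and is supported in `R`, and being supported in `P ∧ Q` means being supported in
both `P` and `Q`. -/

namespace Matrix

variable {d : Type*} [Fintype d]

lemma mul_eq_self_iff_forall_mulVec {R : Type*} [CommSemiring R] {M X : Matrix d d R} :
    M * X = X ↔ ∀ v, M *ᵥ (X *ᵥ v) = X *ᵥ v := by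
  simp only [ext_iff_mulVec, mulVec_mulVec]

lemma trace_vecMulVec_star_mul (x : d → ℂ) (A : Matrix d d ℂ) :
    (vecMulVec x (star x) * A).trace = star x ⬝ᵥ A *ᵥ x := by
  rw [trace_mul_comm, mul_vecMulVec, trace_vecMulVec, dotProduct_comm]

open scoped MatrixOrder in
lemma PosSemidef.trace_mul_nonneg {A B : Matrix d d ℂ} (hA : A.PosSemidef) (hB : B.PosSemidef) :
    0 ≤ (A * B).trace := by
  classical
  obtain ⟨C, rfl⟩ := CStarAlgebra.nonneg_iff_eq_star_mul_self.mp hA.nonneg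
  rw [Matrix.mul_assoc, trace_mul_comm, star_eq_conjTranspose]
  exact (hB.mul_mul_conjTranspose_same C).trace_nonneg

open scoped MatrixOrder in
lemma PosSemidef.trace_conjTranspose_mul_mul_eq_zero_iff {A : Matrix d d ℂ} (hA : A.PosSemidef)
    (X : Matrix d d ℂ) : (Xᴴ * A * X).trace = 0 ↔ A * X = 0 := by
  classical
  refine ⟨fun h ↦ ?_, fun h ↦ by rw [Matrix.mul_assoc, h, Matrix.mul_zero, trace_zero]⟩
  obtain ⟨C, rfl⟩ := CStarAlgebra.nonneg_iff_eq_star_mul_self.mp hA.nonneg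
  rw [(hA.conjTranspose_mul_mul_same X).trace_eq_zero_iff, star_eq_conjTranspose] at h
  have hCX : C * X = 0 := by
    rw [← conjTranspose_mul_self_eq_zero, conjTranspose_mul]
    simpa only [Matrix.mul_assoc] using h
  rw [Matrix.mul_assoc, hCX, Matrix.mul_zero]

/-- Over `ℂ`, polarization makes a matrix with real-valued quadratic form Hermitian. -/
lemma posSemidef_of_forall_dotProduct_mulVec_nonneg [DecidableEq d] {A : Matrix d d ℂ}
    (h : ∀ x, 0 ≤ star x ⬝ᵥ A *ᵥ x) : A.PosSemidef := by
  rw [← isPositive_toEuclideanLin_iff, LinearMap.isPositive_iff_complex]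
  intro x
  have hinner : inner ℂ (toEuclideanLin A x) x = starRingEnd ℂ (star x.ofLp ⬝ᵥ A *ᵥ x.ofLp) := by
    rw [EuclideanSpace.inner_eq_star_dotProduct, ofLp_toLpLin, toLin'_apply, starRingEnd_apply,
      star_dotProduct, star_star, dotProduct_comm]
  have hq := h x.ofLp
  have hreal := Complex.eq_re_of_ofReal_le (r := 0) (by simpa using hq)
  rw [hinner, hreal, Complex.conj_ofReal]
  exact ⟨by simp, by simpa using (Complex.nonneg_iff.mp hq).1⟩

lemma mulVec_eq_self_iff_dotProduct_mulVec_eq [DecidableEq d] {A : Matrix d d ℂ}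
    (hA : (1 - A).PosSemidef) (v : d → ℂ) :
    A *ᵥ v = v ↔ star v ⬝ᵥ A *ᵥ v = star v ⬝ᵥ v := by
  have hzero := hA.dotProduct_mulVec_zero_iff v
  rw [sub_mulVec, one_mulVec, dotProduct_sub, sub_eq_zero, sub_eq_zero] at hzero
  rw [eq_comm, ← hzero, eq_comm]

end Matrix

section Projector

variable {d : Type*} [Fintype d] {R ρ : Matrix d d ℂ}

lemma IsProj.posSemidef (hR : IsProj R) : R.PosSemidef := by
  simpa only [hR.1.eq, hR.2] using posSemidef_conjTranspose_mul_self R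

variable [DecidableEq d]

lemma IsProj.one_sub (hR : IsProj R) : IsProj (1 - R) := by
  refine ⟨isHermitian_one.sub hR.1, ?_⟩
  rw [sub_mul, one_mul, mul_sub, mul_one, hR.2, sub_self, sub_zero]

lemma IsProj.isEffect (hR : IsProj R) : IsEffect R :=
  ⟨hR.posSemidef, hR.one_sub.posSemidef⟩

lemma IsEffect.trace_mul_le_trace (hR : IsEffect R) (hρ : ρ.PosSemidef) :
    (ρ * R).trace ≤ ρ.trace := by
  simpa only [mul_sub, mul_one, trace_sub, sub_nonneg] using hρ.trace_mul_nonneg hR.2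

lemma IsProj.trace_mul_eq_trace_iff (hR : IsProj R) (hρ : ρ.PosSemidef) :
    (ρ * R).trace = ρ.trace ↔ R * ρ = ρ := by
  have hsandwich : ((1 - R)ᴴ * ρ * (1 - R)).trace = ρ.trace - (ρ * R).trace := by
    rw [hR.one_sub.1.eq, Matrix.mul_assoc, trace_mul_comm, Matrix.mul_assoc, hR.one_sub.2,
      mul_sub, mul_one, trace_sub]
  calc (ρ * R).trace = ρ.trace ↔ ((1 - R)ᴴ * ρ * (1 - R)).trace = (0 : ℂ) := by
        rw [hsandwich, sub_eq_zero, eq_comm]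
    _ ↔ ρ * (1 - R) = 0 := hρ.trace_conjTranspose_mul_mul_eq_zero_iff _
    _ ↔ ρ * R = ρ := by rw [mul_sub, mul_one, sub_eq_zero, eq_comm]
    _ ↔ R * ρ = ρ := by rw [← conjTranspose_inj, conjTranspose_mul, hR.1.eq, hρ.1.eq]

end Projector

section Channel

variable {n : ℕ} {Φ Φ' : Matrix (Fin n) (Fin n) ℂ → Matrix (Fin n) (Fin n) ℂ}

lemma IsCP.posSemidef_map (hΦ : IsCP Φ) {A : Matrix (Fin n) (Fin n) ℂ} (hA : A.PosSemidef) :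
    (Φ A).PosSemidef :=
  (hΦ 1 _ (hA.submatrix Prod.snd)).submatrix fun i ↦ ((0 : Fin 1), i)

lemma IsTNI.trace_map_le (hΦ : IsTNI Φ) {A : Matrix (Fin n) (Fin n) ℂ} (hA : A.PosSemidef)
    (hΦA : (Φ A).PosSemidef) : (Φ A).trace ≤ A.trace := by
  have hA_im := (Complex.nonneg_iff.mp hA.trace_nonneg).2
  have hΦA_im := (Complex.nonneg_iff.mp hΦA.trace_nonneg).2
  exact Complex.le_def.mpr ⟨hΦ A hA, hΦA_im.symm.trans hA_im⟩

variable (hadj : ∀ A B, (Φ A * B).trace = (A * Φ' B).trace)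
include hadj

lemma dotProduct_mulVec_eq_trace_of_adjoint (B : Matrix (Fin n) (Fin n) ℂ) (x : Fin n → ℂ) :
    star x ⬝ᵥ Φ' B *ᵥ x = (Φ (vecMulVec x (star x)) * B).trace := by
  rw [hadj, trace_vecMulVec_star_mul]

lemma IsEffect.of_adjoint (hCP : IsCP Φ) (hTNI : IsTNI Φ) {R : Matrix (Fin n) (Fin n) ℂ}
    (hR : IsEffect R) : IsEffect (Φ' R) := by
  have hσ x := hCP.posSemidef_map (posSemidef_vecMulVec_self_star x)
  refine ⟨posSemidef_of_forall_dotProduct_mulVec_nonneg fun x ↦ ?_,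
    posSemidef_of_forall_dotProduct_mulVec_nonneg fun x ↦ ?_⟩
  · rw [dotProduct_mulVec_eq_trace_of_adjoint hadj]
    exact (hσ x).trace_mul_nonneg hR.1
  · rw [sub_mulVec, one_mulVec, dotProduct_sub, dotProduct_mulVec_eq_trace_of_adjoint hadj,
      sub_nonneg]
    calc (Φ (vecMulVec x (star x)) * R).trace ≤ (Φ (vecMulVec x (star x))).trace :=
          hR.trace_mul_le_trace (hσ x)
      _ ≤ (vecMulVec x (star x)).trace :=
          hTNI.trace_map_le (posSemidef_vecMulVec_self_star x) (hσ x)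
      _ = star x ⬝ᵥ x := by rw [trace_vecMulVec, dotProduct_comm]

lemma mulVec_adjoint_eq_self_iff (hCP : IsCP Φ) (hTNI : IsTNI Φ) {R : Matrix (Fin n) (Fin n) ℂ}
    (hR : IsProj R) (v : Fin n → ℂ) :
    Φ' R *ᵥ v = v ↔ (Φ (vecMulVec v (star v))).trace = star v ⬝ᵥ v ∧
      R * Φ (vecMulVec v (star v)) = Φ (vecMulVec v (star v)) := by
  set σ := Φ (vecMulVec v (star v))
  have hσ : σ.PosSemidef := hCP.posSemidef_map (posSemidef_vecMulVec_self_star v)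
  have hσ_le : σ.trace ≤ star v ⬝ᵥ v := by
    simpa only [trace_vecMulVec, dotProduct_comm v] using
      hTNI.trace_map_le (posSemidef_vecMulVec_self_star v) hσ
  rw [mulVec_eq_self_iff_dotProduct_mulVec_eq (hR.isEffect.of_adjoint hadj hCP hTNI).2,
    dotProduct_mulVec_eq_trace_of_adjoint hadj, ← hR.trace_mul_eq_trace_iff hσ]
  constructor
  · intro h
    have htrace : σ.trace = star v ⬝ᵥ v :=
      le_antisymm hσ_le (h ▸ hR.isEffect.trace_mul_le_trace hσ)
    exact ⟨htrace, h.trans htrace.symm⟩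
  · rintro ⟨htrace, hfix⟩
    rw [hfix, htrace]

end Channel

theorem wp_preserves_meets_general {n : ℕ}
    (E E' : Matrix (Fin n) (Fin n) ℂ → Matrix (Fin n) (Fin n) ℂ)
    (hE : IsCPTN E)
    (hadj : ∀ A B : Matrix (Fin n) (Fin n) ℂ, (E A * B).trace = (A * E' B).trace)
    (P Q M : Matrix (Fin n) (Fin n) ℂ)
    (hP : IsProj P) (hQ : IsProj Q) (hM : IsProj M)
    -- `M` is the projector onto `P ∧ Q` (intersection of ranges)
    (hMc : ∀ v : Fin n → ℂ, M.mulVec v = v ↔ (P.mulVec v = v ∧ Q.mulVec v = v)) :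
    {v : Fin n → ℂ | (E' M).mulVec v = v} =
      {v : Fin n → ℂ | (E' P).mulVec v = v} ∩ {v : Fin n → ℂ | (E' Q).mulVec v = v} := by
  obtain ⟨-, hCP, hTNI⟩ := hE
  ext v
  simp only [Set.mem_ofPred_eq, Set.mem_inter_iff, mulVec_adjoint_eq_self_iff hadj hCP hTNI hM,
    mulVec_adjoint_eq_self_iff hadj hCP hTNI hP, mulVec_adjoint_eq_self_iff hadj hCP hTNI hQ,
    mul_eq_self_iff_forall_mulVec, hMc, forall_and]
  tauto

theorem wp_preserves_meets {n : ℕ}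
    (E E' : Matrix (Fin n) (Fin n) ℂ → Matrix (Fin n) (Fin n) ℂ)
    (hE : IsCPTN E) (hE'l : IsLinearMap ℂ E')
    (hadj : ∀ A B : Matrix (Fin n) (Fin n) ℂ, (E A * B).trace = (A * E' B).trace)
    (P Q M : Matrix (Fin n) (Fin n) ℂ)
    (hP : IsProj P) (hQ : IsProj Q) (hM : IsProj M)
    -- `M` is the projector onto `P ∧ Q` (intersection of ranges)
    (hMc : ∀ v : Fin n → ℂ, M.mulVec v = v ↔ (P.mulVec v = v ∧ Q.mulVec v = v)) :
    {v : Fin n → ℂ | (E' M).mulVec v = v} =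
      {v : Fin n → ℂ | (E' P).mulVec v = v} ∩ {v : Fin n → ℂ | (E' Q).mulVec v = v} :=
  wp_preserves_meets_general E E' hE hadj P Q M hP hQ hM hMc
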